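/- Let δ, μ, σ, κ > 0. Then π_PC := (δκ/(18(δ+μ)))·(δ + 6μσ/(κ(δ+μ)) − √(δ² + 3δμσ/(κ(δ+μ)))) is strictly greater than π_OD := δμσ/(4(δ+μ)²). -/

import Mathlib

/-! With `t = μσ/(κ(δ+μ))` and `c = δκ/(18(δ+μ))` we have `π_PC = c (δ + 6t - √(δ² + 3δt))`
and `π_OD = c · 9t/2`, so the claim reduces to `√(δ² + 3δt) < δ + 3t/2`, which holds because
`(δ + 3t/2)² = δ² + 3δt + 9t²/4`. -/

lemma Real.sqrt_sq_add_two_mul_lt {a b : ℝ} (ha : 0 ≤ a) (hb : 0 < b) :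
    √(a ^ 2 + 2 * a * b) < a + b := by
  rw [Real.sqrt_lt' (by linarith)]
  nlinarith

lemma nine_halves_mul_lt_sub_sqrt {a t : ℝ} (ha : 0 ≤ a) (ht : 0 < t) :
    9 / 2 * t < a + 6 * t - √(a ^ 2 + 3 * a * t) := by
  have h := Real.sqrt_sq_add_two_mul_lt ha (by positivity : 0 < 3 / 2 * t)
  rw [show 2 * a * (3 / 2 * t) = 3 * a * t by ring] at h
  linarith

theorem stmt_13 (δ μ σ κ : ℝ) (hδ : 0 < δ) (hμ : 0 < μ) (hσ : 0 < σ) (hκ : 0 < κ) :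
    (δ * κ / (18 * (δ + μ))) *
        (δ + 6 * μ * σ / (κ * (δ + μ))
          - Real.sqrt (δ ^ 2 + 3 * δ * μ * σ / (κ * (δ + μ))))
      > δ * μ * σ / (4 * (δ + μ) ^ 2) := by
  have hδμ : 0 < δ + μ := by positivity
  set t := μ * σ / (κ * (δ + μ)) with ht
  have h6 : 6 * μ * σ / (κ * (δ + μ)) = 6 * t := by rw [ht]; field_simp
  have h3 : 3 * δ * μ * σ / (κ * (δ + μ)) = 3 * δ * t := by rw [ht]; field_simp
  have hOD : δ * μ * σ / (4 * (δ + μ) ^ 2) = δ * κ / (18 * (δ + μ)) * (9 / 2 * t) := by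
    rw [ht]; field_simp; ring
  rw [h6, h3, hOD]
  exact mul_lt_mul_of_pos_left (nine_halves_mul_lt_sub_sqrt hδ.le (by positivity)) (by positivity)
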